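/- arXiv:1911.01216 — 4 statements merged into one kernel-verified Lean document; each statement's English description precedes it below -/
import Mathlib

section
/- Let h : ℝ^n → ℝ be continuous, bounded, and periodic with period 1 in each coordinate, and let φ : ℝ^n → ℝ be continuous with compact support. Then as ε → 0⁺, ∫_{ℝ^n} h(x/ε) φ(x) dx converges to (∫_{[0,1]^n} h(s) ds) · ∫_{ℝ^n} φ(x) dx. -/
/-!
Periodicity makes every shifted average `∫_{[0,1]^n} h (y/ε + v) dv` equal to the mean
`m = ∫_{[0,1]^n} h`. Averaging over the shifts `v` and using Fubini and translation invariance,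
`m ∫ φ = ∫_{[0,1]^n} ∫ h (y/ε) φ (y - ε v) dy dv`, so
`|∫ h (x/ε) φ x dx - m ∫ φ| ≤ M · sup_{‖w‖ ≤ ε} ‖φ (· - w) - φ‖₁`,
which tends to `0` by the `L¹`-continuity of translations of a compactly supported continuous `φ`.
-/

open MeasureTheory Filter Submodule Topology Pointwise

theorem ZSpan.setIntegral_fundamentalDomain_comp_add {ι E F : Type*} [Finite ι]
    [NormedAddCommGroup E] [NormedSpace ℝ E] [MeasurableSpace E] [BorelSpace E]
    [NormedAddCommGroup F] [NormedSpace ℝ F] (b : Module.Basis ι ℝ E) (μ : Measure E)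
    [μ.IsAddLeftInvariant] {f : E → F} (hf : ∀ v ∈ span ℤ (Set.range b), ∀ x, f (v + x) = f x)
    (y : E) :
    ∫ v in fundamentalDomain b, f (y + v) ∂μ = ∫ v in fundamentalDomain b, f v ∂μ := by
  have : Countable (span ℤ (Set.range b)).toAddSubgroup :=
    inferInstanceAs (Countable (span ℤ (Set.range b)))
  have hF := ZSpan.isAddFundamentalDomain' b μ
  calc ∫ v in fundamentalDomain b, f (y + v) ∂μ = ∫ v in y +ᵥ fundamentalDomain b, f v ∂μ := by
        rw [← Set.image_vadd, ← (measurePreserving_add_left μ y).setIntegral_image_emb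
          (measurableEmbedding_addLeft y)]
        rfl
    _ = ∫ v in fundamentalDomain b, f v ∂μ :=
        (hF.vadd_of_comm y).setIntegral_eq hF fun g x => hf g g.2 x

theorem apply_add_of_mem_span_basisFun {ι β : Type*} [Fintype ι] [DecidableEq ι]
    {f : (ι → ℝ) → β} (hf : ∀ x i, f (x + Pi.single i 1) = f x) {v : ι → ℝ}
    (hv : v ∈ span ℤ (Set.range (Pi.basisFun ℝ ι))) (x : ι → ℝ) : f (v + x) = f x := by
  rw [← mem_toAddSubgroup, span_int_eq_addSubgroupClosure] at hv
  induction hv using AddSubgroup.closure_induction generalizing x with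
  | mem _ hu =>
    obtain ⟨i, rfl⟩ := hu
    simpa [add_comm] using hf x i
  | zero => simp
  | add u w _ _ hu hw => rw [add_assoc, hu, hw]
  | neg u _ hu => rw [← hu, add_neg_cancel_left]

theorem setIntegral_Icc_comp_add_of_periodic {ι F : Type*} [Fintype ι] [DecidableEq ι]
    [NormedAddCommGroup F] [NormedSpace ℝ F] {f : (ι → ℝ) → F}
    (hf : ∀ x i, f (x + Pi.single i 1) = f x) (y : ι → ℝ) :
    ∫ v in Set.Icc 0 1, f (y + v) = ∫ v in Set.Icc 0 1, f v := by
  have hae : ZSpan.fundamentalDomain (Pi.basisFun ℝ ι) =ᵐ[volume] Set.Icc (0 : ι → ℝ) 1 := by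
    rw [ZSpan.fundamentalDomain_pi_basisFun, volume_pi]
    exact Measure.univ_pi_Ico_ae_eq_Icc
  rw [← setIntegral_congr_set hae, ← setIntegral_congr_set hae]
  exact ZSpan.setIntegral_fundamentalDomain_comp_add _ _
    (fun v hv x => apply_add_of_mem_span_basisFun hf hv x) y

theorem HasCompactSupport.tendsto_integral_norm_comp_sub_sub {E F : Type*}
    [NormedAddCommGroup E] [ProperSpace E] [MeasurableSpace E] [BorelSpace E]
    [NormedAddCommGroup F] (μ : Measure E) [IsFiniteMeasureOnCompacts μ] {φ : E → F}
    (hφ : Continuous φ) (hφ_supp : HasCompactSupport φ) :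
    Tendsto (fun w => ∫ y, ‖φ (y - w) - φ y‖ ∂μ) (𝓝 0) (𝓝 0) := by
  set K := tsupport φ + Metric.closedBall (0 : E) 1
  have hK : IsCompact K := hφ_supp.isCompact.add (isCompact_closedBall 0 1)
  have hvanish : ∀ w ∈ Metric.closedBall (0 : E) 1, ∀ y ∉ K, ‖φ (y - w) - φ y‖ = 0 := by
    intro w hw y hy
    have h1 : φ y = 0 := image_eq_zero_of_notMem_tsupport fun hy' =>
      hy ⟨y, hy', 0, Metric.mem_closedBall_self zero_le_one, add_zero y⟩
    have h2 : φ (y - w) = 0 := image_eq_zero_of_notMem_tsupport fun hy' =>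
      hy ⟨y - w, hy', w, hw, sub_add_cancel y w⟩
    simp [h1, h2]
  have hcont : Continuous fun w => ∫ y in K, ‖φ (y - w) - φ y‖ ∂μ :=
    continuous_parametric_integral_of_continuous (by fun_prop) hK
  have hlim := hcont.tendsto 0
  simp only [sub_zero, sub_self, norm_zero, integral_zero] at hlim
  refine hlim.congr' ?_
  filter_upwards [Metric.closedBall_mem_nhds (0 : E) one_pos] with w hw
  exact setIntegral_eq_integral_of_forall_compl_eq_zero (hvanish w hw)

section Averaging

variable {E : Type*} [AddCommGroup E] [MeasurableSpace E] [MeasurableAdd₂ E] {μ : Measure E}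
  {ν : Measure E} {g φ : E → ℝ} {M : ℝ}

theorem integrable_uncurry_comp_add_mul [SFinite μ] [IsFiniteMeasure ν] (hg : Measurable g)
    (hgM : ∀ x, |g x| ≤ M) (hφ : Integrable φ μ) :
    Integrable (Function.uncurry fun w y => g (y + w) * φ y) (ν.prod μ) := by
  refine ((integrable_const M).mul_prod hφ.norm).mono'
    ((hg.comp (measurable_snd.add measurable_fst)).aestronglyMeasurable.mul hφ.1.comp_snd)
    (ae_of_all _ fun p => ?_)
  simp only [Function.uncurry, norm_mul, Real.norm_eq_abs]
  exact mul_le_mul_of_nonneg_right (hgM _) (abs_nonneg _)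

theorem integral_integral_comp_add_mul [SFinite μ] [IsFiniteMeasure ν] (hg : Measurable g)
    (hgM : ∀ x, |g x| ≤ M) (hφ : Integrable φ μ) {m : ℝ} (hmean : ∀ y, ∫ w, g (y + w) ∂ν = m) :
    ∫ w, ∫ y, g (y + w) * φ y ∂μ ∂ν = m * ∫ y, φ y ∂μ := by
  rw [integral_integral_swap (integrable_uncurry_comp_add_mul hg hgM hφ)]
  simp only [integral_mul_const, hmean, integral_const_mul]

theorem norm_integral_mul_sub_integral_comp_add_mul_le [μ.IsAddRightInvariant]
    (hg : Measurable g) (hgM : ∀ x, |g x| ≤ M) (hφ : Integrable φ μ) (w : E) :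
    ‖∫ y, g y * φ y ∂μ - ∫ y, g (y + w) * φ y ∂μ‖ ≤ M * ∫ y, ‖φ (y - w) - φ y‖ ∂μ := by
  have hgφ : ∀ w, Integrable (fun y => g y * φ (y - w)) μ := fun w =>
    (hφ.comp_sub_right w).bdd_mul hg.aestronglyMeasurable (ae_of_all _ hgM)
  have hshift : ∫ y, g (y + w) * φ y ∂μ = ∫ y, g y * φ (y - w) ∂μ := by
    simpa using integral_add_right_eq_self (μ := μ) (fun y => g y * φ (y - w)) w
  rw [hshift, ← integral_sub ((hgφ 0).congr (by simp)) (hgφ w), ← integral_const_mul]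
  refine norm_integral_le_of_norm_le (((hφ.comp_sub_right w).sub hφ).norm.const_mul M)
    (ae_of_all _ fun y => ?_)
  rw [← mul_sub, norm_mul, norm_sub_rev]
  exact mul_le_mul_of_nonneg_right (hgM y) (norm_nonneg _)

theorem norm_integral_mul_sub_mean_mul_integral_le [SFinite μ] [μ.IsAddRightInvariant]
    [IsProbabilityMeasure ν] (hg : Measurable g) (hgM : ∀ x, |g x| ≤ M) (hφ : Integrable φ μ)
    {m : ℝ} (hmean : ∀ y, ∫ w, g (y + w) ∂ν = m) {η : ℝ}
    (hη : ∀ᵐ w ∂ν, ∫ y, ‖φ (y - w) - φ y‖ ∂μ ≤ η) :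
    ‖∫ y, g y * φ y ∂μ - m * ∫ y, φ y ∂μ‖ ≤ M * η := by
  have hM : 0 ≤ M := (abs_nonneg _).trans (hgM 0)
  have hbound : ∀ᵐ w ∂ν, ‖∫ y, g y * φ y ∂μ - ∫ y, g (y + w) * φ y ∂μ‖ ≤ M * η := by
    filter_upwards [hη] with w hw
    exact (norm_integral_mul_sub_integral_comp_add_mul_le hg hgM hφ w).trans
      (mul_le_mul_of_nonneg_left hw hM)
  calc ‖∫ y, g y * φ y ∂μ - m * ∫ y, φ y ∂μ‖
      = ‖∫ w, (∫ y, g y * φ y ∂μ - ∫ y, g (y + w) * φ y ∂μ) ∂ν‖ := by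
        have hint : Integrable (fun w => ∫ y, g (y + w) * φ y ∂μ) ν :=
          (integrable_uncurry_comp_add_mul hg hgM hφ).integral_prod_left
        rw [integral_sub (integrable_const _) hint, integral_const, probReal_univ, one_smul,
          integral_integral_comp_add_mul hg hgM hφ hmean]
    _ ≤ M * η := by simpa using norm_integral_le_of_norm_le_const hbound

end Averaging

theorem norm_le_one_of_mem_Icc {ι : Type*} [Fintype ι] {v : ι → ℝ} (hv : v ∈ Set.Icc 0 1) :
    ‖v‖ ≤ 1 :=
  (pi_norm_le_iff_of_nonneg zero_le_one).2 fun i => by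
    rw [Real.norm_eq_abs, abs_le]
    exact ⟨by linarith [show (0 : ℝ) ≤ v i from hv.1 i], hv.2 i⟩

theorem norm_integral_comp_inv_smul_mul_sub_le {ι : Type*} [Fintype ι] [DecidableEq ι]
    {h φ : (ι → ℝ) → ℝ} {M ε η : ℝ} (hh : Continuous h) (hM : ∀ x, |h x| ≤ M)
    (hper : ∀ x i, h (x + Pi.single i 1) = h x) (hφ : Integrable φ) (hε : 0 < ε)
    (hη : ∀ w : ι → ℝ, ‖w‖ ≤ ε → ∫ y, ‖φ (y - w) - φ y‖ ≤ η) :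
    ‖(∫ x, h (ε⁻¹ • x) * φ x) - (∫ s in Set.Icc 0 1, h s) * ∫ x, φ x‖ ≤ M * η := by
  set cube := volume.restrict (Set.Icc (0 : ι → ℝ) 1)
  have hsmul : Measurable (fun v : ι → ℝ => ε • v) := measurable_const_smul ε
  have : IsProbabilityMeasure cube := ⟨by simp [cube, Real.volume_Icc_pi]⟩
  have : IsProbabilityMeasure (cube.map (ε • ·)) :=
    Measure.isProbabilityMeasure_map hsmul.aemeasurable
  have hmean : ∀ y, ∫ w, h (ε⁻¹ • (y + w)) ∂cube.map (ε • ·) = ∫ s in Set.Icc 0 1, h s := by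
    intro y
    rw [integral_map hsmul.aemeasurable (by fun_prop : Continuous fun w =>
      h (ε⁻¹ • (y + w))).aestronglyMeasurable]
    simp only [smul_add, smul_smul, inv_mul_cancel₀ hε.ne', one_smul]
    exact setIntegral_Icc_comp_add_of_periodic hper _
  have hsmall : ∀ᵐ w ∂cube.map (ε • ·), ‖w‖ ≤ ε := by
    refine (ae_map_iff hsmul.aemeasurable (measurableSet_le measurable_norm measurable_const)).2
      (ae_restrict_of_forall_mem measurableSet_Icc fun v hv => ?_)
    rw [norm_smul, Real.norm_of_nonneg hε.le]
    exact mul_le_of_le_one_right hε.le (norm_le_one_of_mem_Icc hv)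
  exact norm_integral_mul_sub_mean_mul_integral_le (hh.comp (continuous_const_smul ε⁻¹)).measurable
    (fun x => hM _) hφ hmean (hsmall.mono hη)

/-- Weak-* convergence of rapidly oscillating periodic functions to their mean:
if `h` is continuous, bounded and 1-periodic in each coordinate and `φ` is continuous with
compact support, then `∫ h(x/ε) φ(x) dx → (∫_{[0,1]^n} h) ∫ φ` as `ε → 0⁺`. -/
theorem oscillating_mean_convergence (n : ℕ)
    (h : (Fin n → ℝ) → ℝ) (hh_cont : Continuous h)
    (hh_bdd : ∃ M : ℝ, ∀ x, |h x| ≤ M)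
    (hh_per : ∀ (x : Fin n → ℝ) (i : Fin n), h (x + Pi.single i 1) = h x)
    (φ : (Fin n → ℝ) → ℝ) (hφ_cont : Continuous φ) (hφ_supp : HasCompactSupport φ) :
    Tendsto (fun ε : ℝ => ∫ x, h (ε⁻¹ • x) * φ x)
      (nhdsWithin 0 (Set.Ioi 0))
      (nhds ((∫ s in Set.Icc (0 : Fin n → ℝ) 1, h s) * ∫ x, φ x)) := by
  obtain ⟨M, hM⟩ := hh_bdd
  have hM0 : 0 ≤ M := (abs_nonneg _).trans (hM 0)
  rw [Metric.tendsto_nhdsWithin_nhds]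
  intro δ hδ
  have hη : 0 < δ / (M + 1) := by positivity
  obtain ⟨r, hr, htransl⟩ := Metric.eventually_nhds_iff.1 <|
    (hφ_supp.tendsto_integral_norm_comp_sub_sub volume hφ_cont).eventually (gt_mem_nhds hη)
  refine ⟨r, hr, fun ε (hε : 0 < ε) hεr => ?_⟩
  rw [Real.dist_0_eq_abs, abs_of_pos hε] at hεr
  rw [dist_eq_norm]
  calc _ ≤ M * (δ / (M + 1)) :=
        norm_integral_comp_inv_smul_mul_sub_le hh_cont hM hh_per
          (hφ_cont.integrable_of_hasCompactSupport hφ_supp) hε fun w hw =>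
            (htransl (by rw [dist_zero_right]; linarith)).le
    _ < δ := by
        rw [mul_div_assoc', div_lt_iff₀ (by linarith)]
        nlinarith
end

section
/- Minty's trick for the p-Laplacian: let Ω ⊂ ℝ^m be a bounded Lipschitz domain, p ≥ 2, u ∈ W^{1,p}(Ω), and let Λ : W^{1,p}(Ω) → ℝ be a continuous linear functional. Suppose that for every v ∈ W^{1,p}(Ω), 0 ≤ Λ(u − v) − ∫_Ω |u|^{p-2} u (u − v) dx − ∫_Ω |∇v|^{p-2} ∇v · (∇u − ∇v) dx. Then for every φ ∈ W^{1,p}(Ω), Λ(φ) = ∫_Ω |u|^{p-2} u φ dx + ∫_Ω |∇u|^{p-2} ∇u · ∇φ dx. -/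
/-!
Testing the inequality with `v = u - t • φ` gives `0 ≤ t * (Λ φ - ∫ |u|^{p-2} u φ - F t)` for every
real `t`, where `F t = ∫ |∇u - t ∇φ|^{p-2} ⟪∇u - t ∇φ, ∇φ⟫`. For `|t| ≤ 1` the integrand of `F` is
dominated by `(|∇u| + |∇φ|)^p`, which is integrable, so `F` is continuous at `0`; letting `t → 0`
from either side forces `F 0 = Λ φ - ∫ |u|^{p-2} u φ`.
-/

open MeasureTheory Filter Topology
open scoped RealInnerProductSpace

lemma gradient_sub_smul {E : Type*} [NormedAddCommGroup E] [InnerProductSpace ℝ E]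
    [CompleteSpace E] {u φ : E → ℝ} {x : E} (hu : DifferentiableAt ℝ u x)
    (hφ : DifferentiableAt ℝ φ x) (c : ℝ) :
    gradient (u - c • φ) x = gradient u x - c • gradient φ x := by
  simp only [gradient, fderiv_sub hu (hφ.const_smul c), fderiv_const_smul hφ, map_sub, map_smul]

lemma ContinuousAt.eq_of_forall_mul_sub_nonneg {f : ℝ → ℝ} {c : ℝ} (hf : ContinuousAt f 0)
    (h : ∀ t ≠ 0, 0 ≤ t * (c - f t)) : f 0 = c := by
  refine le_antisymm ?_ ?_
  · refine le_of_tendsto (hf.tendsto.mono_left nhdsWithin_le_nhds : Tendsto f (𝓝[>] 0) _) ?_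
    filter_upwards [self_mem_nhdsWithin] with t (ht : 0 < t)
    exact sub_nonneg.mp (nonneg_of_mul_nonneg_right (h t ht.ne') ht)
  · refine ge_of_tendsto (hf.tendsto.mono_left nhdsWithin_le_nhds : Tendsto f (𝓝[<] 0) _) ?_
    filter_upwards [self_mem_nhdsWithin] with t (ht : t < 0)
    exact sub_nonpos.mp (nonpos_of_mul_nonneg_right (h t ht.ne) ht)

lemma abs_rpow_norm_mul_inner_le {E : Type*} [NormedAddCommGroup E] [InnerProductSpace ℝ E]
    {p s : ℝ} (hp : 2 ≤ p) {a b : E} (ha : ‖a‖ ≤ s) (hb : ‖b‖ ≤ s) :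
    |‖a‖ ^ (p - 2) * ⟪a, b⟫| ≤ s ^ p := by
  have hs : 0 ≤ s := (norm_nonneg a).trans ha
  calc |‖a‖ ^ (p - 2) * ⟪a, b⟫| = ‖a‖ ^ (p - 2) * |⟪a, b⟫| := by
        rw [abs_mul, abs_of_nonneg (by positivity)]
    _ ≤ s ^ (p - 2) * (s * s) := by
        gcongr
        exact (abs_real_inner_le_norm a b).trans (mul_le_mul ha hb (norm_nonneg b) hs)
    _ = s ^ (p - 2) * s ^ (2 : ℝ) := by rw [Real.rpow_two, sq]
    _ = s ^ p := by rw [← Real.rpow_add' hs (by linarith), sub_add_cancel]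

lemma continuousAt_integral_rpow_norm_mul_inner {α E : Type*} [MeasurableSpace α]
    {μ : Measure α} [NormedAddCommGroup E] [InnerProductSpace ℝ E] {p : ℝ} (hp : 2 ≤ p)
    {G H : α → E} (hG : MemLp G (ENNReal.ofReal p) μ) (hH : MemLp H (ENNReal.ofReal p) μ) :
    ContinuousAt (fun t : ℝ => ∫ x, ‖G x - t • H x‖ ^ (p - 2) * ⟪G x - t • H x, H x⟫ ∂μ) 0 := by
  have hpow : Continuous fun a : E => ‖a‖ ^ (p - 2) :=
    (Real.continuous_rpow_const (by linarith)).comp continuous_norm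
  have hbound : Integrable (fun x => (‖G x‖ + ‖H x‖) ^ p) μ := by
    simpa [abs_of_nonneg (add_nonneg (norm_nonneg _) (norm_nonneg _)),
      ENNReal.toReal_ofReal (by linarith : 0 ≤ p)] using
      (hG.norm.add hH.norm).integrable_norm_rpow (by simp; linarith) ENNReal.ofReal_ne_top
  refine continuousAt_of_dominated ?_ ?_ hbound ?_
  · refine Eventually.of_forall fun t => ?_
    have hGH := hG.1.sub (hH.1.const_smul t)
    exact (hpow.comp_aestronglyMeasurable hGH).mul (hGH.inner hH.1)
  · filter_upwards [Metric.closedBall_mem_nhds (0 : ℝ) one_pos] with t ht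
    refine Eventually.of_forall fun x => ?_
    rw [Real.norm_eq_abs]
    refine abs_rpow_norm_mul_inner_le hp ?_ (le_add_of_nonneg_left (norm_nonneg _))
    calc ‖G x - t • H x‖ ≤ ‖G x‖ + ‖t • H x‖ := norm_sub_le _ _
      _ ≤ ‖G x‖ + ‖H x‖ := by
        rw [norm_smul]
        gcongr
        exact mul_le_of_le_one_left (norm_nonneg _) (by simpa using ht)
  · exact Eventually.of_forall fun x =>
      ((hpow.comp (by fun_prop)).mul (by fun_prop)).continuousAt

theorem minty_trick_pLaplacian_general (m : ℕ) (Ω : Set (EuclideanSpace ℝ (Fin m)))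
    (p : ℝ) (hp : 2 ≤ p)
    (Λ : (EuclideanSpace ℝ (Fin m) → ℝ) → ℝ) (hΛ : IsLinearMap ℝ Λ) :
    let S : Set (EuclideanSpace ℝ (Fin m) → ℝ) :=
      {w | Differentiable ℝ w ∧ MemLp w (ENNReal.ofReal p) (volume.restrict Ω) ∧
        MemLp (fun x => gradient w x) (ENNReal.ofReal p) (volume.restrict Ω)}
    ∀ u ∈ S,
    (∀ v ∈ S,
      0 ≤ Λ (u - v) - (∫ x in Ω, |u x| ^ (p - 2) * u x * (u x - v x)) -
        ∫ x in Ω, ‖gradient v x‖ ^ (p - 2) *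
          ⟪gradient v x, gradient u x - gradient v x⟫) →
    ∀ φ ∈ S,
      Λ φ = (∫ x in Ω, |u x| ^ (p - 2) * u x * φ x) +
        ∫ x in Ω, ‖gradient u x‖ ^ (p - 2) * ⟪gradient u x, gradient φ x⟫ := by
  intro S u ⟨hu, huLp, hu'Lp⟩ hminty φ ⟨hφ, hφLp, hφ'Lp⟩
  set A := ∫ x in Ω, |u x| ^ (p - 2) * u x * φ x
  have hline (t : ℝ) : 0 ≤ t * (Λ φ - A - ∫ x in Ω, ‖gradient u x - t • gradient φ x‖ ^ (p - 2) *
      ⟪gradient u x - t • gradient φ x, gradient φ x⟫) := by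
    have hgrad x : gradient (u - t • φ) x = gradient u x - t • gradient φ x :=
      gradient_sub_smul (hu x) (hφ x) t
    have hv : u - t • φ ∈ S := by
      refine ⟨hu.sub (hφ.const_smul t), huLp.sub (hφLp.const_smul t), ?_⟩
      rw [show (fun x => gradient (u - t • φ) x) = _ from funext hgrad]
      exact hu'Lp.sub (hφ'Lp.const_smul t)
    have h := hminty _ hv
    rw [sub_sub_cancel, hΛ.map_smul] at h
    simp only [hgrad, sub_sub_cancel, Pi.sub_apply, Pi.smul_apply, smul_eq_mul,
      real_inner_smul_right, mul_left_comm _ t, integral_const_mul] at h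
    linarith
  have := (continuousAt_integral_rpow_norm_mul_inner hp hu'Lp hφ'Lp).eq_of_forall_mul_sub_nonneg
    fun t _ => hline t
  simp only [zero_smul, sub_zero] at this
  linarith

/-- Minty's trick for the p-Laplacian: if the variational inequality
`0 ≤ Λ(u−v) − ∫_Ω |u|^{p-2}u(u−v) − ∫_Ω |∇v|^{p-2}∇v·(∇u−∇v)` holds for all admissible `v`,
then `Λ(φ) = ∫_Ω |u|^{p-2}u φ + ∫_Ω |∇u|^{p-2}∇u·∇φ` for all admissible `φ`. -/
theorem minty_trick_pLaplacian (m : ℕ) (Ω : Set (EuclideanSpace ℝ (Fin m)))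
    (hΩ_open : IsOpen Ω) (hΩ_bdd : Bornology.IsBounded Ω)
    (p : ℝ) (hp : 2 ≤ p)
    (Λ : (EuclideanSpace ℝ (Fin m) → ℝ) → ℝ) (hΛ : IsLinearMap ℝ Λ) :
    let S : Set (EuclideanSpace ℝ (Fin m) → ℝ) :=
      {w | Differentiable ℝ w ∧ MemLp w (ENNReal.ofReal p) (volume.restrict Ω) ∧
        MemLp (fun x => gradient w x) (ENNReal.ofReal p) (volume.restrict Ω)}
    ∀ u ∈ S,
    (∀ v ∈ S,
      0 ≤ Λ (u - v) - (∫ x in Ω, |u x| ^ (p - 2) * u x * (u x - v x)) -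
        ∫ x in Ω, ‖gradient v x‖ ^ (p - 2) *
          ⟪gradient v x, gradient u x - gradient v x⟫) →
    ∀ φ ∈ S,
      Λ φ = (∫ x in Ω, |u x| ^ (p - 2) * u x * φ x) +
        ∫ x in Ω, ‖gradient u x‖ ^ (p - 2) * ⟪gradient u x, gradient φ x⟫ :=
  minty_trick_pLaplacian_general m Ω p hp Λ hΛ
end

section
/- Let ω ⊂ ℝ^n be bounded measurable, γ > 0, O^ε a family of measurable subsets of ω × ℝ with |O^ε| ≤ C ε^{γ+1}, f : ℝ → ℝ Lipschitz and bounded, p ≥ 2 with conjugate q, and u_ε, w_ε, u, w functions on ω × ℝ. Assume: (i) the rescaled q-norm bound (1/ε^{γ+1})∫_{O^ε}|u_ε − u|^q → 0; (ii) the rescaled p-norm bound (1/ε^{γ+1})∫_{O^ε}|w_ε − w|^p → 0; (iii) (1/ε^{γ+1})∫_{O^ε}|w|^p ≤ M uniformly in ε; and (iv) (1/ε^{γ+1})∫_{O^ε} f(u) w → ∫_Γ μ f(u) w dS for some function μ on Γ = ω × {0}. Then (1/ε^{γ+1})∫_{O^ε} f(u_ε) w_ε → ∫_Γ μ f(u)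 w dS as ε → 0⁺. -/
/-!
Write `f(uε) wε - f(u) w = f(uε) (wε - w) + (f(uε) - f(u)) w` and integrate against the
rescaled measure `ε^{-(γ+1)} • volume` restricted to `O ε`, whose total mass is at most `C`.
Hölder's inequality bounds the first term by `sup |f| · ‖wε - w‖_p · C^{1/q}` and the second by
`L · ‖w‖_p · ‖uε - u‖_q`, and both bounds tend to `0`.
-/

open MeasureTheory Filter
open scoped ENNReal NNReal

theorem abs_comp_mul_sub_comp_mul_le {f : ℝ → ℝ} {L : ℝ≥0} {K : ℝ} (hf : LipschitzWith L f)
    (hK : ∀ t, |f t| ≤ K) (a a' b b' : ℝ) :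
    |f a' * b' - f a * b| ≤ K * |b' - b| + L * (|a' - a| * |b|) := by
  have hlip : |f a' - f a| ≤ L * |a' - a| := by
    simpa [Real.dist_eq] using hf.dist_le_mul a' a
  calc |f a' * b' - f a * b| = |f a' * (b' - b) + (f a' - f a) * b| := by ring_nf
    _ ≤ |f a'| * |b' - b| + |f a' - f a| * |b| := by
      rw [← abs_mul, ← abs_mul]; exact abs_add_le _ _
    _ ≤ K * |b' - b| + L * |a' - a| * |b| := by gcongr; exact hK _
    _ = K * |b' - b| + L * (|a' - a| * |b|) := by ring

section HolderEstimates

variable {α : Type*} [MeasurableSpace α] {μ : Measure α} {p q : ℝ}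

theorem memLp_ofReal_of_integrable_abs_rpow {g : α → ℝ} (hp : 0 < p)
    (hg : AEStronglyMeasurable g μ) (h : Integrable (fun x => |g x| ^ p) μ) :
    MemLp g (ENNReal.ofReal p) μ :=
  (integrable_norm_rpow_iff hg (by simpa using hp) ENNReal.ofReal_ne_top).1 <| by
    simpa [ENNReal.toReal_ofReal hp.le] using h

theorem integral_abs_mul_abs_le (hpq : p.HolderConjugate q) {g h : α → ℝ}
    (hg : MemLp g (ENNReal.ofReal p) μ) (hh : MemLp h (ENNReal.ofReal q) μ) :
    ∫ x, |g x| * |h x| ∂μ ≤ (∫ x, |g x| ^ p ∂μ) ^ (1 / p) * (∫ x, |h x| ^ q ∂μ) ^ (1 / q) :=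
  integral_mul_le_Lp_mul_Lq_of_nonneg hpq (ae_of_all _ fun _ => abs_nonneg _)
    (ae_of_all _ fun _ => abs_nonneg _) hg.abs hh.abs

theorem integral_abs_le_mul_measureReal_univ [IsFiniteMeasure μ] (hpq : p.HolderConjugate q)
    {g : α → ℝ} (hg : MemLp g (ENNReal.ofReal p) μ) :
    ∫ x, |g x| ∂μ ≤ (∫ x, |g x| ^ p ∂μ) ^ (1 / p) * μ.real Set.univ ^ (1 / q) := by
  simpa [hpq.symm.pos.ne'] using integral_abs_mul_abs_le hpq hg (memLp_const (1 : ℝ))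

theorem abs_integral_comp_mul_sub_le [IsFiniteMeasure μ] (hpq : p.HolderConjugate q)
    {f : ℝ → ℝ} {L : ℝ≥0} {K : ℝ} (hf : LipschitzWith L f) (hK : ∀ t, |f t| ≤ K)
    {u u' w w' : α → ℝ} (hu : AEStronglyMeasurable u μ) (hw : MemLp w (ENNReal.ofReal p) μ)
    (hdu : MemLp (fun x => u' x - u x) (ENNReal.ofReal q) μ)
    (hdw : MemLp (fun x => w' x - w x) (ENNReal.ofReal p) μ) :
    |∫ x, f (u' x) * w' x ∂μ - ∫ x, f (u x) * w x ∂μ| ≤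
      K * ((∫ x, |w' x - w x| ^ p ∂μ) ^ (1 / p) * μ.real Set.univ ^ (1 / q)) +
      L * ((∫ x, |w x| ^ p ∂μ) ^ (1 / p) * (∫ x, |u' x - u x| ^ q ∂μ) ^ (1 / q)) := by
  have : ENNReal.HolderConjugate (ENNReal.ofReal p) (ENNReal.ofReal q) :=
    ENNReal.holderConjugate_iff.2 hpq.inv_add_inv_ennreal
  have hp1 : 1 ≤ ENNReal.ofReal p := ENNReal.HolderConjugate.one_le _ (ENNReal.ofReal q)
  have hu' : AEStronglyMeasurable u' μ :=
    (hdu.1.add hu).congr (ae_of_all _ fun _ => sub_add_cancel _ _)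
  have hbdd (v : α → ℝ) : ∀ᵐ x ∂μ, ‖f (v x)‖ ≤ K := ae_of_all _ fun x => hK (v x)
  have hfu : Integrable (fun x => f (u x) * w x) μ :=
    (hw.integrable hp1).bdd_mul (hf.continuous.comp_aestronglyMeasurable hu) (hbdd u)
  have hfu' : Integrable (fun x => f (u' x) * w' x) μ := by
    refine Integrable.bdd_mul ?_ (hf.continuous.comp_aestronglyMeasurable hu') (hbdd u')
    exact ((hdw.integrable hp1).add (hw.integrable hp1)).congr
      (ae_of_all _ fun _ => sub_add_cancel _ _)
  have hdw1 : Integrable (fun x => |w' x - w x|) μ := (hdw.integrable hp1).abs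
  have hduw : Integrable (fun x => |u' x - u x| * |w x|) μ := hdu.abs.integrable_mul hw.abs
  calc |∫ x, f (u' x) * w' x ∂μ - ∫ x, f (u x) * w x ∂μ|
      ≤ ∫ x, |f (u' x) * w' x - f (u x) * w x| ∂μ := by
        rw [← integral_sub hfu' hfu]; exact abs_integral_le_integral_abs
    _ ≤ ∫ x, (K * |w' x - w x| + L * (|u' x - u x| * |w x|)) ∂μ :=
        integral_mono (hfu'.sub hfu).abs ((hdw1.const_mul K).add (hduw.const_mul L))
          fun x => abs_comp_mul_sub_comp_mul_le hf hK _ _ _ _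
    _ = K * ∫ x, |w' x - w x| ∂μ + L * ∫ x, |u' x - u x| * |w x| ∂μ := by
        rw [integral_add (hdw1.const_mul K) (hduw.const_mul L), integral_const_mul,
          integral_const_mul]
    _ ≤ _ := by
      have hK0 : 0 ≤ K := (abs_nonneg _).trans (hK 0)
      gcongr
      · exact integral_abs_le_mul_measureReal_univ hpq hdw
      · simp_rw [mul_comm |u' _ - u _|]
        exact integral_abs_mul_abs_le hpq hw hdu

theorem abs_rescaled_setIntegral_comp_mul_sub_le (hpq : p.HolderConjugate q) {s : Set α}
    {δ C : ℝ} (hδ : 0 < δ) (hs : μ s ≤ ENNReal.ofReal (C * δ))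
    {f : ℝ → ℝ} {L : ℝ≥0} {K : ℝ} (hf : LipschitzWith L f) (hK : ∀ t, |f t| ≤ K)
    {u u' w w' : α → ℝ} (hu : AEStronglyMeasurable u (μ.restrict s))
    (hu' : AEStronglyMeasurable u' (μ.restrict s)) (hw : AEStronglyMeasurable w (μ.restrict s))
    (hw' : AEStronglyMeasurable w' (μ.restrict s))
    (hwp : IntegrableOn (fun x => |w x| ^ p) s μ)
    (hdu : IntegrableOn (fun x => |u' x - u x| ^ q) s μ)
    (hdw : IntegrableOn (fun x => |w' x - w x| ^ p) s μ) :
    |1 / δ * ∫ x in s, f (u' x) * w' x ∂μ - 1 / δ * ∫ x in s, f (u x) * w x ∂μ| ≤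
      K * ((1 / δ * ∫ x in s, |w' x - w x| ^ p ∂μ) ^ (1 / p) * max C 0 ^ (1 / q)) +
      L * ((1 / δ * ∫ x in s, |w x| ^ p ∂μ) ^ (1 / p) *
        (1 / δ * ∫ x in s, |u' x - u x| ^ q ∂μ) ^ (1 / q)) := by
  set ν := ENNReal.ofReal (1 / δ) • μ.restrict s
  have hν : ν Set.univ ≤ ENNReal.ofReal C := by
    calc ν Set.univ = ENNReal.ofReal (1 / δ) * μ s := by simp [ν]
      _ ≤ ENNReal.ofReal (1 / δ) * ENNReal.ofReal (C * δ) := by gcongr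
      _ = ENNReal.ofReal C := by
        rw [← ENNReal.ofReal_mul (by positivity)]; field_simp
  have : IsFiniteMeasure ν := ⟨hν.trans_lt ENNReal.ofReal_lt_top⟩
  have hint (g : α → ℝ) : ∫ x, g x ∂ν = 1 / δ * ∫ x in s, g x ∂μ := by
    simp [ν, integral_smul_measure, hδ.le]
  have hmem {g : α → ℝ} {r : ℝ} (hr : 0 < r) (hg : AEStronglyMeasurable g (μ.restrict s))
      (h : IntegrableOn (fun x => |g x| ^ r) s μ) : MemLp g (ENNReal.ofReal r) ν :=
    memLp_ofReal_of_integrable_abs_rpow hr (hg.smul_measure _)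
      (h.smul_measure ENNReal.ofReal_ne_top)
  have key := abs_integral_comp_mul_sub_le (μ := ν) hpq hf hK (hu.smul_measure _)
    (hmem hpq.pos hw hwp) (hmem hpq.symm.pos (hu'.sub hu) hdu) (hmem hpq.pos (hw'.sub hw) hdw)
  simp only [hint] at key
  refine key.trans ?_
  have hK0 : 0 ≤ K := (abs_nonneg _).trans (hK 0)
  have hq := hpq.symm.pos
  gcongr
  exact ENNReal.toReal_mono ENNReal.ofReal_ne_top hν

end HolderEstimates

theorem concentrated_term_stability_general (n : ℕ) (ω : Set (Fin n → ℝ))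
    (γ C : ℝ) (O : ℝ → Set ((Fin n → ℝ) × ℝ))
    (hO_vol : ∀ ε > (0 : ℝ), volume (O ε) ≤ ENNReal.ofReal (C * ε ^ (γ + 1)))
    (f : ℝ → ℝ) (L : NNReal) (hf_lip : LipschitzWith L f) (hf_bdd : ∃ M, ∀ t, |f t| ≤ M)
    (p q : ℝ) (hp : 2 ≤ p) (hpq : 1 / p + 1 / q = 1)
    (uε wε : ℝ → (Fin n → ℝ) × ℝ → ℝ) (u w : (Fin n → ℝ) × ℝ → ℝ)
    (hmeas : ∀ ε > (0 : ℝ), Measurable (uε ε) ∧ Measurable (wε ε))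
    (hu_meas : Measurable u) (hw_meas : Measurable w)
    (hInt : ∀ ε > (0 : ℝ),
      IntegrableOn (fun z => |uε ε z - u z| ^ q) (O ε) volume ∧
      IntegrableOn (fun z => |wε ε z - w z| ^ p) (O ε) volume ∧
      IntegrableOn (fun z => |w z| ^ p) (O ε) volume)
    (hu_conv : Tendsto (fun ε => (1 / ε ^ (γ + 1)) * ∫ z in O ε, |uε ε z - u z| ^ q)
      (nhdsWithin 0 (Set.Ioi 0)) (nhds 0))
    (hw_conv : Tendsto (fun ε => (1 / ε ^ (γ + 1)) * ∫ z in O ε, |wε ε z - w z| ^ p)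
      (nhdsWithin 0 (Set.Ioi 0)) (nhds 0))
    (M : ℝ)
    (hw_bdd : ∀ ε > (0 : ℝ), (1 / ε ^ (γ + 1)) * (∫ z in O ε, |w z| ^ p) ≤ M)
    (μΓ : (Fin n → ℝ) → ℝ)
    (hfw_conv : Tendsto (fun ε => (1 / ε ^ (γ + 1)) * ∫ z in O ε, f (u z) * w z)
      (nhdsWithin 0 (Set.Ioi 0))
      (nhds (∫ x in ω, μΓ x * f (u (x, 0)) * w (x, 0)))) :
    Tendsto (fun ε => (1 / ε ^ (γ + 1)) * ∫ z in O ε, f (uε ε z) * wε ε z)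
      (nhdsWithin 0 (Set.Ioi 0))
      (nhds (∫ x in ω, μΓ x * f (u (x, 0)) * w (x, 0))) := by
  obtain ⟨K, hK⟩ := hf_bdd
  have hpq' : p.HolderConjugate q :=
    Real.holderConjugate_iff.2 ⟨by linarith, by simpa only [one_div] using hpq⟩
  have hp0 := hpq'.pos
  have hq0 := hpq'.symm.pos
  have hlim : Tendsto (fun ε =>
      K * (((1 / ε ^ (γ + 1)) * ∫ z in O ε, |wε ε z - w z| ^ p) ^ (1 / p) * max C 0 ^ (1 / q)) +
      L * (M ^ (1 / p) * ((1 / ε ^ (γ + 1)) * ∫ z in O ε, |uε ε z - u z| ^ q) ^ (1 / q)))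
      (nhdsWithin 0 (Set.Ioi 0)) (nhds 0) := by
    have hw' := hw_conv.rpow_const (p := 1 / p) (Or.inr (by positivity))
    have hu' := hu_conv.rpow_const (p := 1 / q) (Or.inr (by positivity))
    rw [Real.zero_rpow (by positivity)] at hw' hu'
    simpa using ((hw'.mul_const _).const_mul K).add ((hu'.const_mul _).const_mul (L : ℝ))
  refine hfw_conv.congr_dist (squeeze_zero' (.of_forall fun _ => dist_nonneg) ?_ hlim)
  filter_upwards [self_mem_nhdsWithin] with ε (hε : 0 < ε)
  obtain ⟨huε, hwε⟩ := hmeas ε hε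
  obtain ⟨hIu, hIw, hIwp⟩ := hInt ε hε
  rw [dist_comm, Real.dist_eq]
  refine (abs_rescaled_setIntegral_comp_mul_sub_le hpq' (by positivity) (hO_vol ε hε) hf_lip hK
    hu_meas.aestronglyMeasurable huε.aestronglyMeasurable hw_meas.aestronglyMeasurable
    hwε.aestronglyMeasurable hIwp hIu hIw).trans ?_
  gcongr
  exact hw_bdd ε hε

/-- Stability of the concentrated nonlinear term under perturbation of both arguments:
if `u_ε → u` in the rescaled `L^q`-sense, `w_ε → w` in the rescaled `L^p`-sense, the rescaled
`L^p`-norm of `w` is uniformly bounded and `(1/ε^{γ+1})∫_{O^ε} f(u) w → ∫_Γ μ f(u) w dS`, then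
`(1/ε^{γ+1})∫_{O^ε} f(u_ε) w_ε → ∫_Γ μ f(u) w dS`. -/
theorem concentrated_term_stability (n : ℕ) (ω : Set (Fin n → ℝ))
    (hω_meas : MeasurableSet ω) (hω_bdd : Bornology.IsBounded ω)
    (γ C : ℝ) (hγ : 0 < γ) (O : ℝ → Set ((Fin n → ℝ) × ℝ))
    (hO_meas : ∀ ε > (0 : ℝ), MeasurableSet (O ε))
    (hO_sub : ∀ ε > (0 : ℝ), O ε ⊆ ω ×ˢ Set.univ)
    (hO_vol : ∀ ε > (0 : ℝ), volume (O ε) ≤ ENNReal.ofReal (C * ε ^ (γ + 1)))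
    (f : ℝ → ℝ) (L : NNReal) (hf_lip : LipschitzWith L f) (hf_bdd : ∃ M, ∀ t, |f t| ≤ M)
    (p q : ℝ) (hp : 2 ≤ p) (hpq : 1 / p + 1 / q = 1)
    (uε wε : ℝ → (Fin n → ℝ) × ℝ → ℝ) (u w : (Fin n → ℝ) × ℝ → ℝ)
    (hmeas : ∀ ε > (0 : ℝ), Measurable (uε ε) ∧ Measurable (wε ε))
    (hu_meas : Measurable u) (hw_meas : Measurable w)
    (hInt : ∀ ε > (0 : ℝ),
      IntegrableOn (fun z => |uε ε z - u z| ^ q) (O ε) volume ∧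
      IntegrableOn (fun z => |wε ε z - w z| ^ p) (O ε) volume ∧
      IntegrableOn (fun z => |w z| ^ p) (O ε) volume)
    (hu_conv : Tendsto (fun ε => (1 / ε ^ (γ + 1)) * ∫ z in O ε, |uε ε z - u z| ^ q)
      (nhdsWithin 0 (Set.Ioi 0)) (nhds 0))
    (hw_conv : Tendsto (fun ε => (1 / ε ^ (γ + 1)) * ∫ z in O ε, |wε ε z - w z| ^ p)
      (nhdsWithin 0 (Set.Ioi 0)) (nhds 0))
    (M : ℝ)
    (hw_bdd : ∀ ε > (0 : ℝ), (1 / ε ^ (γ + 1)) * (∫ z in O ε, |w z| ^ p) ≤ M)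
    (μΓ : (Fin n → ℝ) → ℝ)
    (hfw_conv : Tendsto (fun ε => (1 / ε ^ (γ + 1)) * ∫ z in O ε, f (u z) * w z)
      (nhdsWithin 0 (Set.Ioi 0))
      (nhds (∫ x in ω, μΓ x * f (u (x, 0)) * w (x, 0)))) :
    Tendsto (fun ε => (1 / ε ^ (γ + 1)) * ∫ z in O ε, f (uε ε z) * wε ε z)
      (nhdsWithin 0 (Set.Ioi 0))
      (nhds (∫ x in ω, μΓ x * f (u (x, 0)) * w (x, 0))) :=
  concentrated_term_stability_general n ω γ C O hO_vol f L hf_lip hf_bdd p q hp hpq uε wε u w hmeas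
    hu_meas hw_meas hInt hu_conv hw_conv M hw_bdd μΓ hfw_conv
end

section
/- Let a < b be reals, p ≥ 2, and 1 − 1/p < s ≤ 1. Then for every u in the Sobolev space W^{1,p}(a,b) and every subinterval (c,b) ⊂ (a,b) of length δ = b − c > 0, one has (1/δ)∫_c^b |u(y)|^p dy ≤ C ‖u‖^p_{W^{s,p}(a,b)} for a constant C independent of δ and u (depending only on a, b, s, p). -/
/-!
Write `m γ` for the mean of `u` over `(γ, b)` and `[u]` for the Gagliardo seminorm. Jensen's
inequality and `|x - y| ≤ b - γ` on `(γ, b)` give `∫_γ^b |u - m γ|^p ≤ (b - γ)^{sp} [u]^p`, so the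
means over two intervals `(γ, b) ⊇ (γ', b)` with `b - γ ≤ 2 (b - γ')` differ by at most
`C [u] (b - γ')^{(sp - 1)/p}`. As `sp > p - 1 ≥ 1`, these increments are summable along a dyadic
chain from `(a, b)` to `(c, b)`, so `|m c|^p ≤ C (‖u‖_p^p + [u]^p)` uniformly in `c`; the
oscillation estimate at scale `b - c` then bounds the mean of `|u|^p` over `(c, b)`.
For `s = 1`, the fundamental theorem of calculus and Hölder's inequality bound `|u|^p` pointwise
by `2^{p-1} ((b - a)⁻¹ ‖u‖_p^p + (b - a)^{p-1} ‖u'‖_p^p)`.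
-/

open MeasureTheory Set
open scoped ENNReal

section Averages

variable {α E : Type*} [MeasurableSpace α] [NormedAddCommGroup E] {μ : Measure α} {p : ℝ}

theorem enorm_le_enorm_add_enorm_sub' (x y : E) : ‖x‖ₑ ≤ ‖y‖ₑ + ‖x - y‖ₑ := by
  simpa using enorm_add_le y (x - y)

theorem enorm_rpow_le_two_rpow_mul (hp : 1 ≤ p) (x y : E) :
    ‖x‖ₑ ^ p ≤ 2 ^ (p - 1) * (‖y‖ₑ ^ p + ‖x - y‖ₑ ^ p) :=
  (ENNReal.rpow_le_rpow (enorm_le_enorm_add_enorm_sub' x y) (by linarith)).trans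
    (ENNReal.rpow_add_le_mul_rpow_add_rpow _ _ hp)

theorem rpow_lintegral_enorm_le {f : α → E} (hp : 1 ≤ p) (hf : AEStronglyMeasurable f μ) :
    (∫⁻ x, ‖f x‖ₑ ∂μ) ^ p ≤ μ univ ^ (p - 1) * ∫⁻ x, ‖f x‖ₑ ^ p ∂μ := by
  have h := eLpNorm'_le_eLpNorm'_mul_rpow_measure_univ one_pos hp hf
  simp only [eLpNorm'_eq_lintegral_enorm, ENNReal.rpow_one, div_one] at h
  calc (∫⁻ x, ‖f x‖ₑ ∂μ) ^ p
      ≤ ((∫⁻ x, ‖f x‖ₑ ^ p ∂μ) ^ (1 / p) * μ univ ^ (1 - 1 / p)) ^ p := by gcongr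
    _ = μ univ ^ (p - 1) * ∫⁻ x, ‖f x‖ₑ ^ p ∂μ := by
      have hp0 : p ≠ 0 := by positivity
      rw [ENNReal.mul_rpow_of_nonneg _ _ (by positivity), ← ENNReal.rpow_mul, ← ENNReal.rpow_mul,
        one_div_mul_cancel hp0, ENNReal.rpow_one, mul_comm]
      congr 2
      field_simp

variable [NormedSpace ℝ E]

theorem average_sub_const [CompleteSpace E] [IsFiniteMeasure μ] [NeZero μ] {f : α → E}
    (hf : Integrable f μ) (c : E) : ⨍ x, (f x - c) ∂μ = ⨍ x, f x ∂μ - c := by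
  rw [average_eq, average_eq, integral_sub hf (integrable_const c), integral_const, smul_sub,
    smul_smul, inv_mul_cancel₀ measureReal_univ_ne_zero, one_smul]

theorem enorm_average_rpow_le [IsFiniteMeasure μ] {f : α → E} (hp : 1 ≤ p)
    (hf : AEStronglyMeasurable f μ) :
    ‖⨍ x, f x ∂μ‖ₑ ^ p ≤ (μ univ)⁻¹ * ∫⁻ x, ‖f x‖ₑ ^ p ∂μ := by
  have hp0 : 0 < p := by positivity
  rcases eq_zero_or_neZero μ with rfl | hμ
  · simp [hp0]
  have hμ0 : μ univ ≠ 0 := Measure.measure_univ_ne_zero.2 hμ.ne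
  calc ‖⨍ x, f x ∂μ‖ₑ ^ p = ((μ univ)⁻¹ * ‖∫ x, f x ∂μ‖ₑ) ^ p := by
        rw [average_eq, enorm_smul, enorm_inv measureReal_univ_ne_zero,
          Real.enorm_of_nonneg measureReal_nonneg, measureReal_def,
          ENNReal.ofReal_toReal (measure_ne_top μ univ)]
    _ ≤ ((μ univ)⁻¹ * ∫⁻ x, ‖f x‖ₑ ∂μ) ^ p := by
        gcongr; exact enorm_integral_le_lintegral_enorm f
    _ ≤ ((μ univ)⁻¹) ^ p * (μ univ ^ (p - 1) * ∫⁻ x, ‖f x‖ₑ ^ p ∂μ) := by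
        rw [ENNReal.mul_rpow_of_nonneg _ _ hp0.le]
        gcongr
        exact rpow_lintegral_enorm_le hp hf
    _ = (μ univ)⁻¹ * ∫⁻ x, ‖f x‖ₑ ^ p ∂μ := by
        rw [← mul_assoc, ENNReal.inv_rpow, ENNReal.rpow_sub _ _ hμ0 (measure_ne_top μ univ),
          ENNReal.rpow_one, div_eq_mul_inv, ← mul_assoc, ENNReal.inv_mul_cancel, one_mul]
        · exact (ENNReal.rpow_pos (pos_iff_ne_zero.2 hμ0) (measure_ne_top μ univ)).ne'
        · exact ENNReal.rpow_ne_top_of_nonneg hp0.le (measure_ne_top μ univ)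

end Averages

theorem ofReal_abs_rpow {p : ℝ} (hp : 0 ≤ p) (x : ℝ) : ENNReal.ofReal (|x| ^ p) = ‖x‖ₑ ^ p := by
  rw [Real.enorm_eq_ofReal_abs, ENNReal.ofReal_rpow_of_nonneg (abs_nonneg x) hp]

theorem ofReal_inv_mul_rpow {δ : ℝ} (hδ : 0 < δ) (σ : ℝ) :
    (ENNReal.ofReal δ)⁻¹ * ENNReal.ofReal δ ^ σ = ENNReal.ofReal δ ^ (σ - 1) := by
  rw [ENNReal.rpow_sub _ _ (by simpa using hδ) ENNReal.ofReal_ne_top, ENNReal.rpow_one,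
    div_eq_mul_inv, mul_comm]

theorem ofReal_one_div_mul_setLIntegral_Ioo_const {c b : ℝ} (hcb : c < b) (M : ℝ≥0∞) :
    ENNReal.ofReal (1 / (b - c)) * ∫⁻ _ in Ioo c b, M = M := by
  rw [setLIntegral_const, Real.volume_Ioo, mul_comm M, ← mul_assoc,
    ← ENNReal.ofReal_mul (by simp [(sub_pos.2 hcb).le]), one_div_mul_cancel (sub_pos.2 hcb).ne',
    ENNReal.ofReal_one, one_mul]

theorem neZero_restrict_Ioo {a b : ℝ} (h : a < b) : NeZero (volume.restrict (Ioo a b)) :=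
  ⟨by simpa [Measure.restrict_eq_zero] using h⟩

theorem exists_pos_mul_add_le_ofReal_mul {kI kX : ℝ≥0∞} (hI : kI ≠ ∞) (hX : kX ≠ ∞) :
    ∃ C : ℝ, 0 < C ∧ ∀ I X : ℝ≥0∞, kI * I + kX * X ≤ ENNReal.ofReal C * (I + X) := by
  refine ⟨(kI + kX).toReal + 1, by positivity, fun I X => ?_⟩
  have hk : kI + kX ≤ ENNReal.ofReal ((kI + kX).toReal + 1) :=
    (ENNReal.le_ofReal_iff_toReal_le (ENNReal.add_ne_top.2 ⟨hI, hX⟩) (by positivity)).2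
      (le_add_of_nonneg_right zero_le_one)
  calc kI * I + kX * X ≤ (kI + kX) * (I + X) := by
        rw [add_mul, mul_add, mul_add]
        exact add_le_add le_self_add le_add_self
    _ ≤ _ := by gcongr

theorem rpow_le_mul_rpow_two_pow_of_two_pow_mul_le {t L θ : ℝ} (ht : 0 ≤ t) (hθ : 0 ≤ θ) (n : ℕ)
    (h : 2 ^ n * t ≤ L) : t ^ θ ≤ L ^ θ * ((2 : ℝ) ^ (-θ)) ^ n := by
  have h2n : (0 : ℝ) < 2 ^ n := by positivity
  calc t ^ θ ≤ (L / 2 ^ n) ^ θ := by gcongr; rwa [le_div_iff₀ h2n, mul_comm]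
    _ = L ^ θ * ((2 : ℝ) ^ (-θ)) ^ n := by
      rw [Real.div_rpow ((mul_nonneg h2n.le ht).trans h) h2n.le, div_eq_mul_inv,
        ← Real.rpow_natCast, ← Real.rpow_natCast, ← Real.rpow_mul (by norm_num),
        ← Real.rpow_mul (by norm_num), ← Real.rpow_neg (by norm_num), neg_mul, mul_comm θ]

theorem edist_le_sum_of_dyadic_increment_le {X : Type*} [PseudoEMetricSpace X] {B : ℝ → X}
    {a b θ : ℝ} {K : ℝ≥0∞} (hθ : 0 ≤ θ)
    (hB : ∀ γ γ', a ≤ γ → γ ≤ γ' → γ' < b → b - γ ≤ 2 * (b - γ') →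
      edist (B γ') (B γ) ≤ K * ENNReal.ofReal ((b - γ') ^ θ))
    (n : ℕ) {c : ℝ} (hac : a ≤ c) (hcb : c < b) (hn : b - a ≤ 2 ^ n * (b - c)) :
    edist (B c) (B a) ≤
      K * ENNReal.ofReal ((b - a) ^ θ) * ∑ i ∈ Finset.range n, ENNReal.ofReal (2 ^ (-θ)) ^ i := by
  induction n generalizing c with
  | zero => simp [le_antisymm (by linarith : c ≤ a) hac]
  | succ n ih =>
    by_cases hcn : b - a ≤ 2 ^ n * (b - c)
    · refine (ih hac hcb hcn).trans (mul_le_mul_right ?_ _)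
      exact Finset.sum_le_sum_of_subset (Finset.range_subset_range.2 n.le_succ)
    set c' := max a (b - 2 * (b - c))
    have hc'c : c' ≤ c := max_le hac (by linarith)
    have hstep : edist (B c) (B c') ≤
        K * ENNReal.ofReal ((b - a) ^ θ) * ENNReal.ofReal (2 ^ (-θ)) ^ n := by
      refine (hB c' c (le_max_left _ _) hc'c hcb
        (by linarith [le_max_right a (b - 2 * (b - c))])).trans ?_
      rw [mul_assoc, ← ENNReal.ofReal_pow (by positivity),
        ← ENNReal.ofReal_mul (Real.rpow_nonneg (by linarith) _)]
      gcongr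
      exact rpow_le_mul_rpow_two_pow_of_two_pow_mul_le (by linarith) hθ n (by linarith)
    have hprev := ih (c := c') (le_max_left _ _) (hc'c.trans_lt hcb) <| by
      rcases le_total a (b - 2 * (b - c)) with h | h
      · rw [show c' = b - 2 * (b - c) from max_eq_right h, pow_succ] at *; linarith
      · rw [show c' = a from max_eq_left h, ← sub_nonpos]
        nlinarith [one_le_pow₀ (M₀ := ℝ) (a := 2) (by norm_num) (n := n)]
    calc edist (B c) (B a) ≤ edist (B c) (B c') + edist (B c') (B a) := edist_triangle _ _ _
      _ ≤ _ := by rw [Finset.sum_range_succ, mul_add, add_comm]; gcongr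

theorem edist_le_of_dyadic_increment_le {X : Type*} [PseudoEMetricSpace X] {B : ℝ → X}
    {a b θ : ℝ} {K : ℝ≥0∞} (hθ : 0 ≤ θ)
    (hB : ∀ γ γ', a ≤ γ → γ ≤ γ' → γ' < b → b - γ ≤ 2 * (b - γ') →
      edist (B γ') (B γ) ≤ K * ENNReal.ofReal ((b - γ') ^ θ))
    {c : ℝ} (hac : a ≤ c) (hcb : c < b) :
    edist (B c) (B a) ≤ K * ENNReal.ofReal ((b - a) ^ θ) * (1 - ENNReal.ofReal (2 ^ (-θ)))⁻¹ := by
  obtain ⟨n, hn⟩ := pow_unbounded_of_one_lt ((b - a) / (b - c)) (by norm_num : (1 : ℝ) < 2)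
  rw [div_lt_iff₀ (by linarith)] at hn
  refine (edist_le_sum_of_dyadic_increment_le hθ hB n hac hcb (by linarith)).trans ?_
  rw [← ENNReal.tsum_geometric]
  exact mul_le_mul_right (ENNReal.sum_le_tsum _) _

/-- The `p`-th power of the Gagliardo seminorm `[u]_{W^{s,p}(S)}`. -/
noncomputable def gagliardoSeminormPow (u : ℝ → ℝ) (s p : ℝ) (S : Set ℝ) : ℝ≥0∞ :=
  ∫⁻ x in S, ∫⁻ y in S, ENNReal.ofReal (|u x - u y| ^ p / |x - y| ^ (1 + s * p))

section Gagliardo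

variable {u : ℝ → ℝ} {s p a b : ℝ}

theorem gagliardoSeminormPow_mono {S T : Set ℝ} (h : S ⊆ T) :
    gagliardoSeminormPow u s p S ≤ gagliardoSeminormPow u s p T :=
  (lintegral_mono_set h).trans (lintegral_mono fun _ => lintegral_mono_set h)

theorem enorm_sub_rpow_le_of_abs_sub_le {x y d : ℝ} (hxy : |x - y| ≤ d) (hp : 0 < p)
    (hsp : 0 < 1 + s * p) :
    ‖u x - u y‖ₑ ^ p ≤
      ENNReal.ofReal d ^ (1 + s * p) *
        ENNReal.ofReal (|u x - u y| ^ p / |x - y| ^ (1 + s * p)) := by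
  rcases eq_or_ne x y with rfl | hne
  · simp [hp]
  have ht : 0 < |x - y| := abs_pos.2 (sub_ne_zero.2 hne)
  rw [← ofReal_abs_rpow hp.le, ENNReal.ofReal_rpow_of_nonneg (ht.le.trans hxy) hsp.le,
    ← ENNReal.ofReal_mul (Real.rpow_nonneg (ht.le.trans hxy) _)]
  refine ENNReal.ofReal_le_ofReal ?_
  calc |u x - u y| ^ p = |x - y| ^ (1 + s * p) * (|u x - u y| ^ p / |x - y| ^ (1 + s * p)) := by
        field_simp
    _ ≤ d ^ (1 + s * p) * (|u x - u y| ^ p / |x - y| ^ (1 + s * p)) := by gcongr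

theorem enorm_sub_setAverage_rpow_le {γ x : ℝ} (hu : IntegrableOn u (Ioo γ b)) (hp : 1 ≤ p)
    (hsp : 0 < 1 + s * p) (hx : x ∈ Ioo γ b) :
    ‖u x - ⨍ y in Ioo γ b, u y‖ₑ ^ p ≤ ENNReal.ofReal (b - γ) ^ (s * p) *
      ∫⁻ y in Ioo γ b, ENNReal.ofReal (|u x - u y| ^ p / |x - y| ^ (1 + s * p)) := by
  have hγ : 0 < b - γ := by linarith [hx.1, hx.2]
  have := neZero_restrict_Ioo (sub_pos.1 hγ)
  calc ‖u x - ⨍ y in Ioo γ b, u y‖ₑ ^ p = ‖⨍ y in Ioo γ b, (u y - u x)‖ₑ ^ p := by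
        rw [enorm_sub_rev, average_sub_const hu]
    _ ≤ (ENNReal.ofReal (b - γ))⁻¹ * ∫⁻ y in Ioo γ b, ‖u y - u x‖ₑ ^ p := by
        simpa using enorm_average_rpow_le hp
          (hu.aestronglyMeasurable.sub aestronglyMeasurable_const)
    _ ≤ (ENNReal.ofReal (b - γ))⁻¹ * ∫⁻ y in Ioo γ b, ENNReal.ofReal (b - γ) ^ (1 + s * p) *
          ENNReal.ofReal (|u x - u y| ^ p / |x - y| ^ (1 + s * p)) := by
        refine mul_le_mul_right (setLIntegral_mono' measurableSet_Ioo fun y hy => ?_) _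
        rw [enorm_sub_rev]
        refine enorm_sub_rpow_le_of_abs_sub_le ?_ (by positivity) hsp
        rw [abs_sub_le_iff]
        constructor <;> linarith [hx.1, hx.2, hy.1, hy.2]
    _ = _ := by
        rw [lintegral_const_mul' _ _ (ENNReal.rpow_ne_top_of_nonneg hsp.le ENNReal.ofReal_ne_top),
          ← mul_assoc, ofReal_inv_mul_rpow hγ, add_sub_cancel_left]

theorem lintegral_enorm_sub_setAverage_rpow_le {γ : ℝ} (hγ : γ < b)
    (hu : IntegrableOn u (Ioo γ b)) (hp : 1 ≤ p) (hsp : 0 < 1 + s * p) :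
    ∫⁻ x in Ioo γ b, ‖u x - ⨍ y in Ioo γ b, u y‖ₑ ^ p ≤
      ENNReal.ofReal (b - γ) ^ (s * p) * gagliardoSeminormPow u s p (Ioo γ b) := by
  rw [gagliardoSeminormPow, ← lintegral_const_mul' _ _
    (ENNReal.rpow_ne_top_of_nonneg' (by simpa using hγ) ENNReal.ofReal_ne_top)]
  exact setLIntegral_mono' measurableSet_Ioo fun x hx => enorm_sub_setAverage_rpow_le hu hp hsp hx

theorem enorm_setAverage_sub_setAverage_rpow_le {γ γ' : ℝ} (hγ : γ ≤ γ') (hγ' : γ' < b)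
    (hu : IntegrableOn u (Ioo γ b)) (hp : 1 ≤ p) (hsp : 0 < 1 + s * p) :
    ‖(⨍ x in Ioo γ' b, u x) - ⨍ x in Ioo γ b, u x‖ₑ ^ p ≤
      (ENNReal.ofReal (b - γ'))⁻¹ *
        (ENNReal.ofReal (b - γ) ^ (s * p) * gagliardoSeminormPow u s p (Ioo γ b)) := by
  have hsub : Ioo γ' b ⊆ Ioo γ b := Ioo_subset_Ioo_left hγ
  have := neZero_restrict_Ioo hγ'
  set m := ⨍ x in Ioo γ b, u x
  calc ‖(⨍ x in Ioo γ' b, u x) - m‖ₑ ^ p = ‖⨍ x in Ioo γ' b, (u x - m)‖ₑ ^ p := by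
        rw [average_sub_const (hu.mono_set hsub)]
    _ ≤ (ENNReal.ofReal (b - γ'))⁻¹ * ∫⁻ x in Ioo γ' b, ‖u x - m‖ₑ ^ p := by
        simpa using enorm_average_rpow_le hp
          ((hu.mono_set hsub).aestronglyMeasurable.sub aestronglyMeasurable_const)
    _ ≤ (ENNReal.ofReal (b - γ'))⁻¹ * ∫⁻ x in Ioo γ b, ‖u x - m‖ₑ ^ p := by
        gcongr 1; exact lintegral_mono_set hsub
    _ ≤ _ := by
        gcongr 1; exact lintegral_enorm_sub_setAverage_rpow_le (hγ.trans_lt hγ') hu hp hsp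

theorem edist_setAverage_le_of_le_two_mul {γ γ' : ℝ} (haγ : a ≤ γ) (hγ : γ ≤ γ') (hγ' : γ' < b)
    (h2 : b - γ ≤ 2 * (b - γ')) (hu : IntegrableOn u (Ioo a b)) (hp : 1 ≤ p)
    (hsp : 0 ≤ s * p) :
    edist (⨍ x in Ioo γ' b, u x) (⨍ x in Ioo γ b, u x) ≤
      (2 ^ (s * p) * gagliardoSeminormPow u s p (Ioo a b)) ^ p⁻¹ *
        ENNReal.ofReal ((b - γ') ^ ((s * p - 1) / p)) := by
  have hp0 : 0 < p := by linarith
  have hδ : 0 < b - γ' := by linarith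
  rw [edist_eq_enorm_sub, ← ENNReal.rpow_le_rpow_iff hp0]
  calc ‖(⨍ x in Ioo γ' b, u x) - ⨍ x in Ioo γ b, u x‖ₑ ^ p
      ≤ (ENNReal.ofReal (b - γ'))⁻¹ *
          (ENNReal.ofReal (b - γ) ^ (s * p) * gagliardoSeminormPow u s p (Ioo γ b)) :=
        enorm_setAverage_sub_setAverage_rpow_le hγ hγ' (hu.mono_set (Ioo_subset_Ioo_left haγ)) hp
          (by linarith)
    _ ≤ (ENNReal.ofReal (b - γ'))⁻¹ *
          ((2 * ENNReal.ofReal (b - γ')) ^ (s * p) * gagliardoSeminormPow u s p (Ioo a b)) := by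
        gcongr
        · rw [← ENNReal.ofReal_ofNat 2, ← ENNReal.ofReal_mul zero_le_two]
          exact ENNReal.ofReal_le_ofReal h2
        · exact gagliardoSeminormPow_mono (Ioo_subset_Ioo_left haγ)
    _ = ((2 ^ (s * p) * gagliardoSeminormPow u s p (Ioo a b)) ^ p⁻¹ *
          ENNReal.ofReal ((b - γ') ^ ((s * p - 1) / p))) ^ p := by
        rw [ENNReal.mul_rpow_of_nonneg _ _ hp0.le, ENNReal.rpow_inv_rpow hp0.ne',
          ← ENNReal.ofReal_rpow_of_pos hδ, ← ENNReal.rpow_mul, div_mul_cancel₀ _ hp0.ne',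
          ENNReal.mul_rpow_of_nonneg _ _ hsp, ← ofReal_inv_mul_rpow hδ]
        ring

theorem enorm_setAverage_rpow_le (hu : IntegrableOn u (Ioo a b)) (hp : 1 ≤ p) (hsp : 1 ≤ s * p)
    {c : ℝ} (hac : a ≤ c) (hcb : c < b) :
    ‖⨍ x in Ioo c b, u x‖ₑ ^ p ≤ 2 ^ (p - 1) *
      ((ENNReal.ofReal (b - a))⁻¹ * (∫⁻ x in Ioo a b, ‖u x‖ₑ ^ p) +
        2 ^ (s * p) * gagliardoSeminormPow u s p (Ioo a b) * ENNReal.ofReal (b - a) ^ (s * p - 1) *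
          ((1 - ENNReal.ofReal (2 ^ (-((s * p - 1) / p))))⁻¹) ^ p) := by
  have hp0 : 0 < p := by linarith
  have hba : 0 < b - a := by linarith
  set m := fun γ => ⨍ x in Ioo γ b, u x
  have hchain := edist_le_of_dyadic_increment_le (B := m) (by positivity)
    (fun γ γ' h1 h2 h3 h4 => edist_setAverage_le_of_le_two_mul h1 h2 h3 h4 hu hp (by linarith))
    hac hcb
  have hma : ‖m a‖ₑ ^ p ≤ (ENNReal.ofReal (b - a))⁻¹ * ∫⁻ x in Ioo a b, ‖u x‖ₑ ^ p := by
    have := neZero_restrict_Ioo (hac.trans_lt hcb)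
    simpa using enorm_average_rpow_le hp hu.aestronglyMeasurable
  refine (enorm_rpow_le_two_rpow_mul hp (m c) (m a)).trans ?_
  gcongr
  rw [← edist_eq_enorm_sub]
  refine (ENNReal.rpow_le_rpow hchain hp0.le).trans_eq ?_
  rw [ENNReal.mul_rpow_of_nonneg _ _ hp0.le, ENNReal.mul_rpow_of_nonneg _ _ hp0.le,
    ENNReal.rpow_inv_rpow hp0.ne', ← ENNReal.ofReal_rpow_of_pos hba, ← ENNReal.rpow_mul,
    div_mul_cancel₀ _ hp0.ne']

theorem ofReal_one_div_mul_setLIntegral_enorm_rpow_le {c : ℝ} (hcb : c < b)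
    (hu : IntegrableOn u (Ioo c b)) (hp : 1 ≤ p) (hsp : 0 < 1 + s * p) :
    ENNReal.ofReal (1 / (b - c)) * ∫⁻ y in Ioo c b, ‖u y‖ₑ ^ p ≤ 2 ^ (p - 1) *
      (‖⨍ x in Ioo c b, u x‖ₑ ^ p +
        ENNReal.ofReal (b - c) ^ (s * p - 1) * gagliardoSeminormPow u s p (Ioo c b)) := by
  have hδ : 0 < b - c := by linarith
  set m := ⨍ x in Ioo c b, u x
  calc ENNReal.ofReal (1 / (b - c)) * ∫⁻ y in Ioo c b, ‖u y‖ₑ ^ p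
      ≤ ENNReal.ofReal (1 / (b - c)) *
          ∫⁻ y in Ioo c b, 2 ^ (p - 1) * (‖m‖ₑ ^ p + ‖u y - m‖ₑ ^ p) := by
        gcongr with y
        exact enorm_rpow_le_two_rpow_mul hp (u y) m
    _ = 2 ^ (p - 1) * (ENNReal.ofReal (1 / (b - c)) * (∫⁻ _ in Ioo c b, ‖m‖ₑ ^ p) +
          ENNReal.ofReal (1 / (b - c)) * ∫⁻ y in Ioo c b, ‖u y - m‖ₑ ^ p) := by
        rw [lintegral_const_mul' _ _ (by simp), lintegral_add_left measurable_const]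
        ring
    _ ≤ _ := by
        rw [ofReal_one_div_mul_setLIntegral_Ioo_const hcb, one_div,
          ENNReal.ofReal_inv_of_pos hδ]
        gcongr _ * (_ + ?_)
        refine (mul_le_mul_right
          (lintegral_enorm_sub_setAverage_rpow_le hcb hu hp hsp) _).trans_eq ?_
        rw [← mul_assoc, ofReal_inv_mul_rpow hδ]

theorem exists_ofReal_one_div_mul_setLIntegral_le_of_gagliardo (hab : a < b) (hp : 1 ≤ p)
    (hsp : 1 < s * p) :
    ∃ C : ℝ, 0 < C ∧ ∀ u : ℝ → ℝ, IntegrableOn u (Ioo a b) → ∀ c, a ≤ c → c < b →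
      ENNReal.ofReal (1 / (b - c)) * ∫⁻ y in Ioo c b, ‖u y‖ₑ ^ p ≤
        ENNReal.ofReal C *
          ((∫⁻ y in Ioo a b, ‖u y‖ₑ ^ p) + gagliardoSeminormPow u s p (Ioo a b)) := by
  set L := ENNReal.ofReal (b - a)
  set r := ENNReal.ofReal (2 ^ (-((s * p - 1) / p)))
  have hr : r < 1 := by
    refine ENNReal.ofReal_lt_one.2 (Real.rpow_lt_one_of_one_lt_of_neg one_lt_two ?_)
    exact neg_neg_of_pos (div_pos (by linarith) (by linarith))
  have hL : L⁻¹ ≠ ∞ := ENNReal.inv_ne_top.2 (by simpa [L] using hab)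
  have hr' : (1 - r)⁻¹ ≠ ∞ := ENNReal.inv_ne_top.2 (tsub_pos_of_lt hr).ne'
  obtain ⟨C, hC, hCle⟩ := exists_pos_mul_add_le_ofReal_mul
    (kI := 2 ^ (p - 1) * 2 ^ (p - 1) * L⁻¹)
    (kX := 2 ^ (p - 1) * (L ^ (s * p - 1) + 2 ^ (p - 1) * 2 ^ (s * p) * L ^ (s * p - 1) *
      ((1 - r)⁻¹) ^ p)) (by finiteness) (by finiteness)
  refine ⟨C, hC, fun u hu c hac hcb => ?_⟩
  calc _ ≤ 2 ^ (p - 1) * (‖⨍ x in Ioo c b, u x‖ₑ ^ p +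
          ENNReal.ofReal (b - c) ^ (s * p - 1) * gagliardoSeminormPow u s p (Ioo c b)) :=
        ofReal_one_div_mul_setLIntegral_enorm_rpow_le hcb
          (hu.mono_set (Ioo_subset_Ioo_left hac)) hp (by linarith)
    _ ≤ 2 ^ (p - 1) * (2 ^ (p - 1) * (L⁻¹ * (∫⁻ x in Ioo a b, ‖u x‖ₑ ^ p) +
          2 ^ (s * p) * gagliardoSeminormPow u s p (Ioo a b) * L ^ (s * p - 1) * ((1 - r)⁻¹) ^ p) +
          L ^ (s * p - 1) * gagliardoSeminormPow u s p (Ioo a b)) := by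
        gcongr
        · exact enorm_setAverage_rpow_le hu hp hsp.le hac hcb
        · exact ENNReal.ofReal_le_ofReal (by linarith)
        · exact gagliardoSeminormPow_mono (Ioo_subset_Ioo_left hac)
    _ = _ := by ring
    _ ≤ _ := hCle _ _

end Gagliardo

section Derivative

variable {E : Type*} [NormedAddCommGroup E] [NormedSpace ℝ E] [CompleteSpace E] {u : ℝ → E}
  {p a b : ℝ}

theorem enorm_sub_le_setLIntegral_enorm_deriv {x y : ℝ} (hxy : x ≤ y)
    (hu : ∀ t ∈ Icc x y, DifferentiableAt ℝ u t) :
    ‖u y - u x‖ₑ ≤ ∫⁻ t in Ioo x y, ‖deriv u t‖ₑ := by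
  by_cases h : ∫⁻ t in Ioo x y, ‖deriv u t‖ₑ = ∞
  · simp [h]
  have hint : IntegrableOn (deriv u) (Ioo x y) :=
    ⟨aestronglyMeasurable_deriv u _, lt_top_iff_ne_top.2 h⟩
  rw [← intervalIntegral.integral_eq_sub_of_hasDerivAt
      (fun t ht => (hu t (uIcc_of_le hxy ▸ ht)).hasDerivAt)
      ((intervalIntegrable_iff_integrableOn_Ioo_of_le hxy).2 hint),
    intervalIntegral.integral_of_le hxy, integral_Ioc_eq_integral_Ioo]
  exact enorm_integral_le_lintegral_enorm _

theorem enorm_sub_le_setLIntegral_enorm_deriv_of_mem_Icc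
    (hu : ∀ x ∈ Icc a b, DifferentiableAt ℝ u x) {x y : ℝ} (hx : x ∈ Icc a b) (hy : y ∈ Icc a b) :
    ‖u y - u x‖ₑ ≤ ∫⁻ t in Ioo a b, ‖deriv u t‖ₑ := by
  wlog hxy : x ≤ y generalizing x y
  · rw [enorm_sub_rev]; exact this hy hx (le_of_not_ge hxy)
  exact (enorm_sub_le_setLIntegral_enorm_deriv hxy fun t ht =>
    hu t ⟨hx.1.trans ht.1, ht.2.trans hy.2⟩).trans (lintegral_mono_set (Ioo_subset_Ioo hx.1 hy.2))

theorem enorm_rpow_le_of_differentiableAt (hab : a < b)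
    (hu : ∀ x ∈ Icc a b, DifferentiableAt ℝ u x) (hp : 1 ≤ p) {y : ℝ} (hy : y ∈ Icc a b) :
    ‖u y‖ₑ ^ p ≤ 2 ^ (p - 1) *
      (ENNReal.ofReal (1 / (b - a)) * (∫⁻ x in Ioo a b, ‖u x‖ₑ ^ p) +
        ENNReal.ofReal (b - a) ^ (p - 1) * ∫⁻ x in Ioo a b, ‖deriv u x‖ₑ ^ p) := by
  set D := ∫⁻ t in Ioo a b, ‖deriv u t‖ₑ
  have hD : D ^ p ≤ ENNReal.ofReal (b - a) ^ (p - 1) * ∫⁻ x in Ioo a b, ‖deriv u x‖ₑ ^ p := by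
    simpa using
      rpow_lintegral_enorm_le hp (aestronglyMeasurable_deriv u (volume.restrict (Ioo a b)))
  have hsplit : ∀ x ∈ Ioo a b, ‖u y‖ₑ ^ p ≤ 2 ^ (p - 1) * (‖u x‖ₑ ^ p + D ^ p) := fun x hx =>
    (enorm_rpow_le_two_rpow_mul hp (u y) (u x)).trans (by
      gcongr
      exact enorm_sub_le_setLIntegral_enorm_deriv_of_mem_Icc hu (Ioo_subset_Icc_self hx) hy)
  calc ‖u y‖ₑ ^ p = ENNReal.ofReal (1 / (b - a)) * ∫⁻ _ in Ioo a b, ‖u y‖ₑ ^ p :=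
        (ofReal_one_div_mul_setLIntegral_Ioo_const hab _).symm
    _ ≤ ENNReal.ofReal (1 / (b - a)) * ∫⁻ x in Ioo a b, 2 ^ (p - 1) * (‖u x‖ₑ ^ p + D ^ p) := by
        gcongr 1; exact setLIntegral_mono' measurableSet_Ioo hsplit
    _ = 2 ^ (p - 1) * (ENNReal.ofReal (1 / (b - a)) * (∫⁻ x in Ioo a b, ‖u x‖ₑ ^ p) +
          ENNReal.ofReal (1 / (b - a)) * ∫⁻ _ in Ioo a b, D ^ p) := by
        rw [lintegral_const_mul' _ _ (by simp), lintegral_add_right _ measurable_const]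
        ring
    _ ≤ _ := by
        rw [ofReal_one_div_mul_setLIntegral_Ioo_const hab]
        gcongr

theorem exists_ofReal_one_div_mul_setLIntegral_le_of_deriv (hab : a < b) (hp : 1 ≤ p) :
    ∃ C : ℝ, 0 < C ∧ ∀ u : ℝ → E, (∀ x ∈ Icc a b, DifferentiableAt ℝ u x) →
      ∀ c, a ≤ c → c < b →
      ENNReal.ofReal (1 / (b - c)) * ∫⁻ y in Ioo c b, ‖u y‖ₑ ^ p ≤
        ENNReal.ofReal C *
          ((∫⁻ y in Ioo a b, ‖u y‖ₑ ^ p) + ∫⁻ y in Ioo a b, ‖deriv u y‖ₑ ^ p) := by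
  obtain ⟨C, hC, hCle⟩ := exists_pos_mul_add_le_ofReal_mul
    (kI := 2 ^ (p - 1) * ENNReal.ofReal (1 / (b - a)))
    (kX := 2 ^ (p - 1) * ENNReal.ofReal (b - a) ^ (p - 1)) (by finiteness) (by finiteness)
  refine ⟨C, hC, fun u hu c hac hcb => ?_⟩
  calc _ ≤ ENNReal.ofReal (1 / (b - c)) * ∫⁻ _ in Ioo c b, 2 ^ (p - 1) *
        (ENNReal.ofReal (1 / (b - a)) * (∫⁻ x in Ioo a b, ‖u x‖ₑ ^ p) +
          ENNReal.ofReal (b - a) ^ (p - 1) * ∫⁻ x in Ioo a b, ‖deriv u x‖ₑ ^ p) := by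
        gcongr 1
        exact setLIntegral_mono' measurableSet_Ioo fun y hy =>
          enorm_rpow_le_of_differentiableAt hab hu hp ⟨hac.trans hy.1.le, hy.2.le⟩
    _ = _ := by rw [ofReal_one_div_mul_setLIntegral_Ioo_const hcb]; ring
    _ ≤ _ := hCle _ _

end Derivative

theorem endpoint_average_fractional_estimate_general (a b p s : ℝ) (hab : a < b)
    (hp : 2 ≤ p) (hs : 1 - 1 / p < s) :
    ∃ C : ℝ, 0 < C ∧ ∀ u : ℝ → ℝ,
      (∀ x ∈ Set.Icc a b, DifferentiableAt ℝ u x) →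
      ∀ c : ℝ, a ≤ c → c < b →
        ENNReal.ofReal (1 / (b - c)) *
            (∫⁻ y in Set.Ioo c b, ENNReal.ofReal (|u y| ^ p)) ≤
          ENNReal.ofReal C *
            ((∫⁻ y in Set.Ioo a b, ENNReal.ofReal (|u y| ^ p)) +
              if s = 1 then ∫⁻ y in Set.Ioo a b, ENNReal.ofReal (|deriv u y| ^ p)
              else ∫⁻ x in Set.Ioo a b, ∫⁻ y in Set.Ioo a b,
                ENNReal.ofReal (|u x - u y| ^ p / |x - y| ^ (1 + s * p))) := by
  have hp1 : 1 ≤ p := by linarith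
  simp only [ofReal_abs_rpow (by linarith : (0 : ℝ) ≤ p)]
  by_cases hs1 : s = 1
  · obtain ⟨C, hC, hbound⟩ :=
      exists_ofReal_one_div_mul_setLIntegral_le_of_deriv (E := ℝ) hab hp1
    refine ⟨C, hC, fun u hu c hac hcb => ?_⟩
    rw [if_pos hs1]
    exact hbound u hu c hac hcb
  · have hsp : 1 < s * p := by
      have := mul_lt_mul_of_pos_right hs (by linarith : (0 : ℝ) < p)
      rw [sub_mul, one_div_mul_cancel (by linarith)] at this
      linarith
    obtain ⟨C, hC, hbound⟩ := exists_ofReal_one_div_mul_setLIntegral_le_of_gagliardo hab hp1 hsp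
    refine ⟨C, hC, fun u hu c hac hcb => ?_⟩
    rw [if_neg hs1]
    have hcont : ContinuousOn u (Icc a b) := fun x hx => (hu x hx).continuousAt.continuousWithinAt
    exact hbound u (hcont.integrableOn_Icc.mono_set Ioo_subset_Icc_self) c hac hcb

/-- One-dimensional core of the concentrated-integral estimate: for `p ≥ 2` and
`1 − 1/p < s ≤ 1` there is `C` (depending only on `a, b, s, p`) such that for every
`u ∈ W^{1,p}(a,b)` and every subinterval `(c,b)` of length `δ`,
`(1/δ) ∫_c^b |u|^p ≤ C ‖u‖^p_{W^{s,p}(a,b)}`, where for `s < 1` the `W^{s,p}` norm is the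
Sobolev–Slobodeckij norm and for `s = 1` it is the `W^{1,p}` norm. -/
theorem endpoint_average_fractional_estimate (a b p s : ℝ) (hab : a < b)
    (hp : 2 ≤ p) (hs : 1 - 1 / p < s) (hs1 : s ≤ 1) :
    ∃ C : ℝ, 0 < C ∧ ∀ u : ℝ → ℝ,
      (∀ x ∈ Set.Icc a b, DifferentiableAt ℝ u x) →
      ∀ c : ℝ, a ≤ c → c < b →
        ENNReal.ofReal (1 / (b - c)) *
            (∫⁻ y in Set.Ioo c b, ENNReal.ofReal (|u y| ^ p)) ≤
          ENNReal.ofReal C *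
            ((∫⁻ y in Set.Ioo a b, ENNReal.ofReal (|u y| ^ p)) +
              if s = 1 then ∫⁻ y in Set.Ioo a b, ENNReal.ofReal (|deriv u y| ^ p)
              else ∫⁻ x in Set.Ioo a b, ∫⁻ y in Set.Ioo a b,
                ENNReal.ofReal (|u x - u y| ^ p / |x - y| ^ (1 + s * p))) :=
  endpoint_average_fractional_estimate_general a b p s hab hp hs
end
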